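/- arXiv:2401.02315 — 5 statements merged into one kernel-verified Lean document; each statement's English description precedes it below -/
import Mathlib

section
/- Let Γ be a finite abelian group, and let R, B be disjoint inverse-closed subsets of Γ not containing 0. In the Cayley graph Cay(Γ, B ∪ R), with edges of difference in B coloured 1 and edges of difference in R coloured 2, the number of colour-1 edges {u, w} with u ∈ B and w ∈ R equals twice the number of colour-2 edges within B, i.e., twice the number of pairs {u, x} ⊆ B with u - x ∈ R. -/
theorem stmt_4 {Γ : Type*} [AddCommGroup Γ] [Fintype Γ] (R B : Set Γ)
    (hdisj : Disjoint R B) (h0R : (0 : Γ) ∉ R) (h0B : (0 : Γ) ∉ B)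
    (hRinv : ∀ s ∈ R, -s ∈ R) (hBinv : ∀ s ∈ B, -s ∈ B) :
    {e : Sym2 Γ | ∃ u w : Γ, e = s(u, w) ∧ u ∈ B ∧ w ∈ R ∧ u - w ∈ B}.ncard =
      2 * {e : Sym2 Γ | ∃ u x : Γ, e = s(u, x) ∧ u ∈ B ∧ x ∈ B ∧ u - x ∈ R}.ncard := by
  classical
  set L : Set (Sym2 Γ) := {e : Sym2 Γ | ∃ u w : Γ, e = s(u, w) ∧ u ∈ B ∧ w ∈ R ∧ u - w ∈ B}
  set Rs : Set (Sym2 Γ) := {e : Sym2 Γ | ∃ u x : Γ, e = s(u, x) ∧ u ∈ B ∧ x ∈ B ∧ u - x ∈ R}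
  set L' : Set (Γ × Γ) := {p : Γ × Γ | p.1 ∈ B ∧ p.2 ∈ R ∧ p.1 - p.2 ∈ B}
  have hdisj' : ∀ x, x ∈ R → x ∈ B → False := fun x hx hy =>
    Set.disjoint_left.mp hdisj hx hy
  -- L is the image of L' under (a,b) ↦ s(a,b), injectively
  have hLimg : L = (fun p : Γ × Γ => s(p.1, p.2)) '' L' := by
    ext e
    constructor
    · rintro ⟨u, w, rfl, hu, hw, huw⟩
      exact ⟨(u, w), ⟨hu, hw, huw⟩, rfl⟩
    · rintro ⟨⟨a, b⟩, ⟨ha, hb, hab⟩, rfl⟩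
      exact ⟨a, b, rfl, ha, hb, hab⟩
  have hinj : Set.InjOn (fun p : Γ × Γ => s(p.1, p.2)) L' := by
    rintro ⟨a, b⟩ ⟨ha, hb, -⟩ ⟨c, d⟩ ⟨hc, hd, -⟩ h
    simp only [Sym2.eq_iff] at h
    rcases h with ⟨rfl, rfl⟩ | ⟨rfl, rfl⟩
    · rfl
    · exact absurd hb (fun hb => hdisj' _ hb hc)
  have h1 : L.ncard = L'.ncard := by
    rw [hLimg, Set.ncard_image_of_injOn hinj]
  -- Rs is the image of L' under g : (a,b) ↦ s(a, a - b), with fibers of size 2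
  set g : Γ × Γ → Sym2 Γ := fun p => s(p.1, p.1 - p.2) with hg
  have hRimg : Rs = g '' L' := by
    ext e
    constructor
    · rintro ⟨u, x, rfl, hu, hx, hux⟩
      refine ⟨(u, u - x), ⟨hu, hux, by simpa using hx⟩, by simp [hg]⟩
    · rintro ⟨⟨a, b⟩, ⟨ha, hb, hab⟩, rfl⟩
      exact ⟨a, a - b, rfl, ha, hab, by simpa using hb⟩
  -- Finset versions
  have hfin : L'.Finite := Set.toFinite _
  have hfinR : (g '' L').Finite := Set.toFinite _
  set F : Finset (Γ × Γ) := hfin.toFinset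
  set T : Finset (Sym2 Γ) := hfinR.toFinset
  have hmaps : ∀ p ∈ F, g p ∈ T := by
    intro p hp
    simp only [F, T, Set.Finite.mem_toFinset] at hp ⊢
    exact ⟨p, hp, rfl⟩
  have hcard : F.card = ∑ e ∈ T, (F.filter (fun p => g p = e)).card :=
    Finset.card_eq_sum_card_fiberwise hmaps
  have hfiber : ∀ e ∈ T, (F.filter (fun p => g p = e)).card = 2 := by
    intro e he
    simp only [T, Set.Finite.mem_toFinset] at he
    obtain ⟨⟨u, b⟩, ⟨hu, hb, hub⟩, rfl⟩ := he
    set x : Γ := u - b with hx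
    have hbx : b = u - x := by simp [hx]
    have hxB : x ∈ B := hub
    have hxu : x - u = -b := by simp [hx]
    have hxuR : x - u ∈ R := by rw [hxu]; exact hRinv _ hb
    have hne : u ≠ x := by
      intro h
      apply h0R
      have : u - x ∈ R := by rw [← hbx]; exact hb
      rwa [h, sub_self] at this
    have hfe : F.filter (fun p => g p = s(u, x)) = {(u, u - x), (x, x - u)} := by
      ext ⟨c, d⟩
      simp only [Finset.mem_filter, Finset.mem_insert, Finset.mem_singleton, F,
        Set.Finite.mem_toFinset, hg, Prod.mk.injEq]
      constructor
      · rintro ⟨⟨hc, hd, hcd⟩, heq⟩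
        rw [Sym2.eq_iff] at heq
        rcases heq with ⟨rfl, h2⟩ | ⟨rfl, h2⟩
        · left; exact ⟨rfl, by rw [← h2]; abel⟩
        · right; exact ⟨rfl, by rw [← h2]; abel⟩
      · rintro (⟨rfl, rfl⟩ | ⟨rfl, rfl⟩)
        · refine ⟨⟨hu, by rw [← hbx]; exact hb, by simpa using hxB⟩, by simp⟩
        · refine ⟨⟨hxB, hxuR, by simpa using hu⟩, ?_⟩
          have : x - (x - u) = u := by abel
          rw [this, Sym2.eq_swap]
    have hg2 : g (u, b) = s(u, x) := by simp [hg, hx]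
    rw [hg2, hfe, Finset.card_insert_of_notMem (by simp [Prod.ext_iff, hne]),
      Finset.card_singleton]
  have h2 : L'.ncard = 2 * (g '' L').ncard := by
    rw [Set.ncard_eq_toFinset_card _ hfin, Set.ncard_eq_toFinset_card _ hfinR]
    rw [hcard, Finset.sum_congr rfl hfiber, Finset.sum_const, smul_eq_mul, mul_comm]
  rw [h1, h2, hRimg]
end

section
/- Let n be a positive integer and let A₀, B₀ be nonempty disjoint integer intervals contained in the open interval (n/8, n/4) with every element of A₀ less than every element of B₀, and let B₁ ⊆ B₀ be an integer interval. Define A = A₀ ∪ (-A₀) and B = B₀ ∪ (-B₀) ∪ (B₁+B₁) ∪ (-(B₁+B₁)), all viewed as subsets of ℤ/nℤ. Then (A + B) ∩ A = ∅ in ℤ/nℤ. -/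
open Pointwise

theorem stmt_5 (n : ℕ) (hn : 0 < n) (a₁ a₂ b₁ b₂ c₁ c₂ : ℤ)
    (A₀ B₀ B₁ : Set ℤ)
    (hA₀ : A₀ = Set.Icc a₁ a₂) (hB₀ : B₀ = Set.Icc b₁ b₂) (hB₁ : B₁ = Set.Icc c₁ c₂)
    (hA₀ne : A₀.Nonempty) (hB₀ne : B₀.Nonempty)
    (hdisj : Disjoint A₀ B₀)
    (hrange : ∀ x ∈ A₀ ∪ B₀, (n : ℤ) < 8 * x ∧ 4 * x < n)
    (hlt : ∀ x ∈ A₀, ∀ y ∈ B₀, x < y)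
    (hsub : B₁ ⊆ B₀)
    (A B : Set (ZMod n))
    (hA : A = (fun x : ℤ => (x : ZMod n)) '' (A₀ ∪ -A₀))
    (hB : B = (fun x : ℤ => (x : ZMod n)) '' (B₀ ∪ -B₀ ∪ (B₁ + B₁) ∪ -(B₁ + B₁))) :
    (A + B) ∩ A = ∅ := by
  rw [Set.eq_empty_iff_forall_notMem]
  rintro z ⟨hzAB, hzA⟩
  rw [Set.mem_add] at hzAB
  obtain ⟨x, hx, y, hy, hxy⟩ := hzAB
  rw [hA] at hx hzA
  rw [hB] at hy
  obtain ⟨p, hp, rfl⟩ := hx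
  obtain ⟨q, hq, rfl⟩ := hy
  obtain ⟨r, hr, hrz⟩ := hzA
  have hcast : ((p + q : ℤ) : ZMod n) = ((r : ℤ) : ZMod n) := by
    push_cast
    rw [hxy]; exact hrz.symm
  have hdvd : (n : ℤ) ∣ r - (p + q) :=
    ((ZMod.intCast_eq_intCast_iff _ _ _).mp hcast).dvd
  obtain ⟨u, huA, hpu⟩ : ∃ u, u ∈ A₀ ∧ (p = u ∨ p = -u) := by
    rcases hp with h | h
    · exact ⟨p, h, Or.inl rfl⟩
    · exact ⟨-p, Set.mem_neg.mp h, Or.inr (by ring)⟩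
  obtain ⟨v, hvA, hrv⟩ : ∃ v, v ∈ A₀ ∧ (r = v ∨ r = -v) := by
    rcases hr with h | h
    · exact ⟨r, h, Or.inl rfl⟩
    · exact ⟨-r, Set.mem_neg.mp h, Or.inr (by ring)⟩
  obtain ⟨hu1, hu2⟩ := hrange u (Or.inl huA)
  obtain ⟨hv1, hv2⟩ := hrange v (Or.inl hvA)
  rcases hq with ((hw | hw) | hst) | hst
  · obtain ⟨hw1, hw2⟩ := hrange q (Or.inr hw)
    have habs : |r - (p + q)| < n := by rw [abs_lt]; omega
    have key := Int.eq_zero_of_abs_lt_dvd hdvd habs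
    omega
  · obtain ⟨hw1, hw2⟩ := hrange (-q) (Or.inr (Set.mem_neg.mp hw))
    have habs : |r - (p + q)| < n := by rw [abs_lt]; omega
    have key := Int.eq_zero_of_abs_lt_dvd hdvd habs
    omega
  · obtain ⟨s, hs, t, ht, hstq⟩ := Set.mem_add.mp hst
    obtain ⟨hs1, hs2⟩ := hrange s (Or.inr (hsub hs))
    obtain ⟨ht1, ht2⟩ := hrange t (Or.inr (hsub ht))
    have hus := hlt u huA s (hsub hs)
    have hut := hlt u huA t (hsub ht)
    have hvs := hlt v hvA s (hsub hs)
    have hvt := hlt v hvA t (hsub ht)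
    have habs : |r - (p + q)| < n := by rw [abs_lt]; omega
    have key := Int.eq_zero_of_abs_lt_dvd hdvd habs
    omega
  · obtain ⟨s, hs, t, ht, hstq⟩ := Set.mem_add.mp (Set.mem_neg.mp hst)
    obtain ⟨hs1, hs2⟩ := hrange s (Or.inr (hsub hs))
    obtain ⟨ht1, ht2⟩ := hrange t (Or.inr (hsub ht))
    have hus := hlt u huA s (hsub hs)
    have hut := hlt u huA t (hsub ht)
    have hvs := hlt v hvA s (hsub hs)
    have hvt := hlt v hvA t (hsub ht)
    have habs : |r - (p + q)| < n := by rw [abs_lt]; omega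
    have key := Int.eq_zero_of_abs_lt_dvd hdvd habs
    omega
end

section
/- In the Cartesian product G □ H of two edge-coloured graphs with the inherited product colouring, for any vertex (u,v) and colour j, the number of colour-j edges in the subgraph induced by the closed neighbourhood N[(u,v)] equals e_j^G[u] + e_j^H[v], where e_j^G[u] (resp. e_j^H[v]) is the number of colour-j edges induced by the closed neighbourhood of u in G (resp. of v in H). -/
/-- The number of colour-`j` edges of `G` in the subgraph induced by the
closed neighbourhood of `u`. -/
noncomputable def ejClosed {V : Type*} (G : SimpleGraph V) (col : Sym2 V → ℕ)
    (j : ℕ) (u : V) : ℕ :=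
  {e : Sym2 V | e ∈ G.edgeSet ∧ (∀ x ∈ e, x ∈ insert u (G.neighborSet u)) ∧
    col e = j}.ncard

theorem stmt_9 {V W : Type*} [Fintype V] [Fintype W] [DecidableEq V]
    (G : SimpleGraph V) (H : SimpleGraph W)
    (colG : Sym2 V → ℕ) (colH : Sym2 W → ℕ) (colP : Sym2 (V × W) → ℕ)
    (hcolP : ∀ p q : V × W,
      colP s(p, q) = if p.1 = q.1 then colH s(p.2, q.2) else colG s(p.1, q.1))
    (j : ℕ) (u : V) (v : W) :
    ejClosed (G.boxProd H) colP j (u, v) = ejClosed G colG j u + ejClosed H colH j v := by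
  classical
  set f : Sym2 V → Sym2 (V × W) := Sym2.map (fun a => (a, v)) with hf
  set g : Sym2 W → Sym2 (V × W) := Sym2.map (fun b => (u, b)) with hg
  have hfinj : Function.Injective f :=
    Sym2.map.injective (fun a b h => by simpa using h)
  have hginj : Function.Injective g :=
    Sym2.map.injective (fun a b h => by simpa using h)
  set SG : Set (Sym2 V) := {e : Sym2 V | e ∈ G.edgeSet ∧
      (∀ x ∈ e, x ∈ insert u (G.neighborSet u)) ∧ colG e = j} with hSGdef
  set SH : Set (Sym2 W) := {e : Sym2 W | e ∈ H.edgeSet ∧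
      (∀ x ∈ e, x ∈ insert v (H.neighborSet v)) ∧ colH e = j} with hSHdef
  have hmem : ∀ x : V × W,
      x ∈ insert (u, v) ((G.boxProd H).neighborSet (u, v)) →
      (x.2 = v ∧ x.1 ∈ insert u (G.neighborSet u)) ∨
      (x.1 = u ∧ x.2 ∈ insert v (H.neighborSet v)) := by
    rintro ⟨a, b⟩ hx
    rcases hx with h | h
    · left
      obtain ⟨h1, h2⟩ := Prod.mk.injEq .. ▸ h
      exact ⟨h2, Or.inl h1⟩
    · rw [SimpleGraph.mem_neighborSet, SimpleGraph.boxProd_adj] at h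
      rcases h with ⟨h1, h2⟩ | ⟨h1, h2⟩
      · exact Or.inl ⟨h2.symm, Or.inr h1⟩
      · exact Or.inr ⟨h2.symm, Or.inr h1⟩
  have hsub1 : f '' SG ⊆ {e : Sym2 (V × W) | e ∈ (G.boxProd H).edgeSet ∧
      (∀ x ∈ e, x ∈ insert (u, v) ((G.boxProd H).neighborSet (u, v))) ∧ colP e = j} := by
    rintro e ⟨e', he, rfl⟩
    revert he
    induction e' using Sym2.ind with
    | _ a b =>
      rintro ⟨h1, h2, h3⟩
      rw [SimpleGraph.mem_edgeSet] at h1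
      refine ⟨?_, ?_, ?_⟩
      · rw [hf, Sym2.map_pair_eq, SimpleGraph.mem_edgeSet, SimpleGraph.boxProd_adj]
        exact Or.inl ⟨h1, rfl⟩
      · rw [hf, Sym2.map_pair_eq]
        intro x hx
        rcases Sym2.mem_iff.mp hx with rfl | rfl
        · rcases h2 a (Sym2.mem_mk_left a b) with rfl | ha
          · exact Set.mem_insert _ _
          · exact Set.mem_insert_iff.mpr (Or.inr (by
              rw [SimpleGraph.mem_neighborSet, SimpleGraph.boxProd_adj]
              exact Or.inl ⟨ha, rfl⟩))
        · rcases h2 b (Sym2.mem_mk_right a b) with rfl | hb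
          · exact Set.mem_insert _ _
          · exact Set.mem_insert_iff.mpr (Or.inr (by
              rw [SimpleGraph.mem_neighborSet, SimpleGraph.boxProd_adj]
              exact Or.inl ⟨hb, rfl⟩))
      · rw [hf, Sym2.map_pair_eq, hcolP]
        simpa [h1.ne] using h3
  have hsub2 : g '' SH ⊆ {e : Sym2 (V × W) | e ∈ (G.boxProd H).edgeSet ∧
      (∀ x ∈ e, x ∈ insert (u, v) ((G.boxProd H).neighborSet (u, v))) ∧ colP e = j} := by
    rintro e ⟨e', he, rfl⟩
    revert he
    induction e' using Sym2.ind with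
    | _ a b =>
      rintro ⟨h1, h2, h3⟩
      rw [SimpleGraph.mem_edgeSet] at h1
      refine ⟨?_, ?_, ?_⟩
      · rw [hg, Sym2.map_pair_eq, SimpleGraph.mem_edgeSet, SimpleGraph.boxProd_adj]
        exact Or.inr ⟨h1, rfl⟩
      · rw [hg, Sym2.map_pair_eq]
        intro x hx
        rcases Sym2.mem_iff.mp hx with rfl | rfl
        · rcases h2 a (Sym2.mem_mk_left a b) with rfl | ha
          · exact Set.mem_insert _ _
          · exact Set.mem_insert_iff.mpr (Or.inr (by
              rw [SimpleGraph.mem_neighborSet, SimpleGraph.boxProd_adj]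
              exact Or.inr ⟨ha, rfl⟩))
        · rcases h2 b (Sym2.mem_mk_right a b) with rfl | hb
          · exact Set.mem_insert _ _
          · exact Set.mem_insert_iff.mpr (Or.inr (by
              rw [SimpleGraph.mem_neighborSet, SimpleGraph.boxProd_adj]
              exact Or.inr ⟨hb, rfl⟩))
      · rw [hg, Sym2.map_pair_eq, hcolP]
        simpa using h3
  have hset : {e : Sym2 (V × W) | e ∈ (G.boxProd H).edgeSet ∧
      (∀ x ∈ e, x ∈ insert (u, v) ((G.boxProd H).neighborSet (u, v))) ∧ colP e = j}
      = f '' SG ∪ g '' SH := by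
    apply Set.Subset.antisymm
    · intro e
      induction e using Sym2.ind with
      | _ p q =>
        obtain ⟨p1, p2⟩ := p
        obtain ⟨q1, q2⟩ := q
        rintro ⟨hadj, hnb, hcol⟩
        rw [SimpleGraph.mem_edgeSet, SimpleGraph.boxProd_adj] at hadj
        have hp := hmem _ (hnb _ (Sym2.mem_mk_left _ _))
        have hq := hmem _ (hnb _ (Sym2.mem_mk_right _ _))
        simp only [] at hp hq
        rcases hadj with ⟨hA, hE⟩ | ⟨hA, hE⟩
        · -- G-direction edge, hA : G.Adj p1 q1, hE : p2 = q2
          simp only [] at hA hE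
          subst hE
          have key : p2 = v ∧ p1 ∈ insert u (G.neighborSet u) ∧
              q1 ∈ insert u (G.neighborSet u) := by
            rcases hp with ⟨hp2, hp1⟩ | ⟨hp1, hp2⟩ <;>
              rcases hq with ⟨hq2, hq1⟩ | ⟨hq1, hq2⟩
            · exact ⟨hp2, hp1, hq1⟩
            · exact ⟨hp2, hp1, Or.inl hq1⟩
            · exact ⟨hq2, Or.inl hp1, hq1⟩
            · exact absurd (hp1.trans hq1.symm) hA.ne
          obtain ⟨hp2, hp1, hq1⟩ := key
          left
          refine ⟨s(p1, q1), ⟨(SimpleGraph.mem_edgeSet G).mpr hA, ?_, ?_⟩, ?_⟩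
          · intro x hx
            rcases Sym2.mem_iff.mp hx with rfl | rfl
            · exact hp1
            · exact hq1
          · have h := hcolP (p1, p2) (q1, p2)
            simp only [hA.ne, if_false] at h
            rw [← h]; exact hcol
          · rw [hf, Sym2.map_pair_eq, hp2]
        · -- H-direction edge, hA : H.Adj p2 q2, hE : p1 = q1
          simp only [] at hA hE
          subst hE
          have key : p1 = u ∧ p2 ∈ insert v (H.neighborSet v) ∧
              q2 ∈ insert v (H.neighborSet v) := by
            rcases hp with ⟨hp2, hp1⟩ | ⟨hp1, hp2⟩ <;>
              rcases hq with ⟨hq2, hq1⟩ | ⟨hq1, hq2⟩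
            · exact absurd (hp2.trans hq2.symm) hA.ne
            · exact ⟨hq1, Or.inl hp2, hq2⟩
            · exact ⟨hp1, hp2, Or.inl hq2⟩
            · exact ⟨hp1, hp2, hq2⟩
          obtain ⟨hp1, hp2, hq2⟩ := key
          right
          refine ⟨s(p2, q2), ⟨(SimpleGraph.mem_edgeSet H).mpr hA, ?_, ?_⟩, ?_⟩
          · intro x hx
            rcases Sym2.mem_iff.mp hx with rfl | rfl
            · exact hp2
            · exact hq2
          · have h := hcolP (p1, p2) (p1, q2)
            simp only [ite_true, eq_self_iff_true, if_true] at h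
            rw [← h]; exact hcol
          · rw [hg, Sym2.map_pair_eq, hp1]
    · exact Set.union_subset hsub1 hsub2
  have hdisj : Disjoint (f '' SG) (g '' SH) := by
    rw [Set.disjoint_left]
    rintro e ⟨e1, he1, rfl⟩ ⟨e2, he2, heq⟩
    revert he1 heq
    induction e1 using Sym2.ind with
    | _ a b =>
      revert he2
      induction e2 using Sym2.ind with
      | _ c d =>
        rintro he2 ⟨h1, -, -⟩ heq
        rw [hf, hg, Sym2.map_pair_eq, Sym2.map_pair_eq, Sym2.eq_iff] at heq
        have hAdj : G.Adj a b := (SimpleGraph.mem_edgeSet G).mp h1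
        rcases heq with ⟨h3, h4⟩ | ⟨h3, h4⟩ <;>
          · simp only [Prod.ext_iff, Prod.fst, Prod.snd] at h3 h4
            first | exact hAdj.ne (h3.1.symm.trans h4.1) | exact hAdj.ne' (h3.1.symm.trans h4.1)
  rw [ejClosed, ejClosed, ejClosed, hset,
    Set.ncard_union_eq hdisj (Set.toFinite _) (Set.toFinite _),
    Set.ncard_image_of_injective _ hfinj, Set.ncard_image_of_injective _ hginj]
end

section
/- In the strong product G ⊠ H of two edge-coloured graphs with the inherited colouring (edges {(u,v),(u',v')} coloured by {v,v'} in H when u = u', otherwise by {u,u'} in G), for any vertex (u,v) and colour j: e_j[(u,v)] = e_j^H[v]·(1 + deg^G(u)) + e_j^G[u]·(1 + deg^H(v) + 2·Σ_{i=1}^k e_i^H[v]), where e_j[·] counts colour-j edges in the induced closed neighbourhood. -/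
/-- The strong product of two simple graphs. -/
def strongProd {V W : Type*} (G : SimpleGraph V) (H : SimpleGraph W) :
    SimpleGraph (V × W) where
  Adj p q := (p.1 = q.1 ∧ H.Adj p.2 q.2) ∨ (p.2 = q.2 ∧ G.Adj p.1 q.1) ∨
    (G.Adj p.1 q.1 ∧ H.Adj p.2 q.2)
  symm := by
    constructor
    rintro p q (⟨h1, h2⟩ | ⟨h1, h2⟩ | ⟨h1, h2⟩)
    · exact Or.inl ⟨h1.symm, h2.symm⟩
    · exact Or.inr (Or.inl ⟨h1.symm, h2.symm⟩)
    · exact Or.inr (Or.inr ⟨h1.symm, h2.symm⟩)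
  loopless := by
    constructor
    rintro p (⟨_, h⟩ | ⟨_, h⟩ | ⟨h, _⟩)
    · exact H.irrefl h
    · exact G.irrefl h
    · exact G.irrefl h

/-! Count ordered adjacent pairs rather than edges, so that every edge count enters doubled.
The closed neighbourhood of `(u, v)` in `G ⊠ H` is `N[u] × N[v]`. An adjacent pair
`((a, b), (a', b'))` in it with `a = a'` is a vertex `a ∈ N[u]` together with an adjacent pair of
`H` in `N[v]`, and it carries the `H`-colour. With `a ≠ a'` it carries the `G`-colour and splits
into an adjacent pair of `G` in `N[u]` and a pair `(b, b')` of `N[v]` that is either diagonal or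
an edge of `H`; the edges of `H` in `N[v]` are counted by summing over their colours. -/

open Finset

namespace SimpleGraph

variable {V W : Type*}

def colourClassOn (G : SimpleGraph V) (col : Sym2 V → ℕ) (j : ℕ) (S : Set V) :
    SimpleGraph V where
  Adj x y := G.Adj x y ∧ x ∈ S ∧ y ∈ S ∧ col s(x, y) = j
  symm := ⟨fun _ _ ⟨h, hx, hy, hc⟩ => ⟨h.symm, hy, hx, by rwa [Sym2.eq_swap]⟩⟩
  loopless := ⟨fun _ h => G.irrefl h.1⟩

section ColourClass

variable {G : SimpleGraph V} {col : Sym2 V → ℕ} {S : Set V} {j : ℕ}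

@[simp]
lemma colourClassOn_adj {x y : V} :
    (G.colourClassOn col j S).Adj x y ↔ G.Adj x y ∧ x ∈ S ∧ y ∈ S ∧ col s(x, y) = j :=
  Iff.rfl

lemma ejClosed_eq_ncard_edgeSet_colourClassOn (u : V) :
    ejClosed G col j u = (G.colourClassOn col j (insert u (G.neighborSet u))).edgeSet.ncard := by
  unfold ejClosed
  congr 1
  ext e
  induction e using Sym2.ind with
  | _ x y =>
    simp only [Set.mem_ofPred_eq, mem_edgeSet, Sym2.mem_iff, forall_eq_or_imp, forall_eq,
      colourClassOn_adj]
    tauto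

lemma ncard_closedNbhd [Finite V] (u : V) :
    (insert u (G.neighborSet u)).ncard = 1 + (G.neighborSet u).ncard := by
  rw [Set.ncard_insert_of_notMem (by simp), add_comm]

variable [Fintype V]

open scoped Classical in
lemma two_mul_ncard_edgeSet :
    2 * G.edgeSet.ncard = #{p : V × V | G.Adj p.1 p.2} := by
  convert two_mul_card_edgeFinset G using 2
  exact Set.ncard_eq_toFinset_card' _

open scoped Classical in
lemma card_adj_on_eq_sum_colourClassOn {C : Finset ℕ} (hC : ∀ e ∈ G.edgeSet, col e ∈ C) :
    #{p : V × V | G.Adj p.1 p.2 ∧ p.1 ∈ S ∧ p.2 ∈ S} =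
      ∑ i ∈ C, #{p : V × V | (G.colourClassOn col i S).Adj p.1 p.2} := by
  rw [card_eq_sum_card_fiberwise (f := fun p : V × V => col s(p.1, p.2)) (t := C)
    fun p hp => hC _ (mem_filter.1 hp).2.1]
  refine sum_congr rfl fun i _ => congrArg card ?_
  ext p
  simp only [mem_filter, mem_univ, true_and, colourClassOn_adj, and_assoc]

open scoped Classical in
lemma card_eq_or_adj_on :
    #{p : V × V | (p.1 = p.2 ∨ G.Adj p.1 p.2) ∧ p.1 ∈ S ∧ p.2 ∈ S} =
      S.ncard + #{p : V × V | G.Adj p.1 p.2 ∧ p.1 ∈ S ∧ p.2 ∈ S} := by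
  have hdiag : #{p : V × V | p.1 = p.2 ∧ p.1 ∈ S ∧ p.2 ∈ S} = S.ncard := by
    rw [Set.ncard_eq_toFinset_card', ← S.toFinset.diag_card]
    congr 1
    ext ⟨x, y⟩
    simp only [mem_filter, mem_univ, true_and, mem_diag, Set.mem_toFinset]
    constructor
    · rintro ⟨rfl, hx, -⟩
      exact ⟨hx, rfl⟩
    · rintro ⟨hx, rfl⟩
      exact ⟨rfl, hx, hx⟩
  rw [← hdiag, ← card_union_of_disjoint (disjoint_filter.2 fun p _ h hadj => hadj.1.ne h.1)]
  congr 1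
  ext
  simp only [mem_filter, mem_univ, true_and, mem_union]
  tauto

end ColourClass

section StrongProd

variable {G : SimpleGraph V} {H : SimpleGraph W} {colG : Sym2 V → ℕ} {colH : Sym2 W → ℕ}
  {colP : Sym2 (V × W) → ℕ} {S : Set V} {T : Set W} {j : ℕ}

lemma closedNbhd_strongProd (u : V) (v : W) :
    insert (u, v) ((strongProd G H).neighborSet (u, v)) =
      insert u (G.neighborSet u) ×ˢ insert v (H.neighborSet v) := by
  ext ⟨a, b⟩
  simp only [Set.mem_insert_iff, mem_neighborSet, strongProd, Prod.mk.injEq, Set.mem_prod]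
  tauto

lemma colourClassOn_strongProd_adj_of_fst_eq
    (hfib : ∀ a b b', colP s((a, b), (a, b')) = colH s(b, b')) (a : V) (b b' : W) :
    ((strongProd G H).colourClassOn colP j (S ×ˢ T)).Adj (a, b) (a, b') ↔
      a ∈ S ∧ (H.colourClassOn colH j T).Adj b b' := by
  simp only [colourClassOn_adj, strongProd, Set.mem_prod, hfib, G.irrefl, false_and, or_false,
    true_and]
  tauto

lemma colourClassOn_strongProd_adj_of_fst_ne
    (hbase : ∀ a a' b b', a ≠ a' → colP s((a, b), (a', b')) = colG s(a, a'))
    {a a' : V} (ha : a ≠ a') (b b' : W) :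
    ((strongProd G H).colourClassOn colP j (S ×ˢ T)).Adj (a, b) (a', b') ↔
      (G.colourClassOn colG j S).Adj a a' ∧ (b = b' ∨ H.Adj b b') ∧ b ∈ T ∧ b' ∈ T := by
  simp only [colourClassOn_adj, strongProd, Set.mem_prod, hbase _ _ _ _ ha, ha, false_and,
    false_or]
  tauto

variable [Fintype V] [Fintype W]

open scoped Classical in
lemma card_adj_colourClassOn_strongProd_fst_eq
    (hfib : ∀ a b b', colP s((a, b), (a, b')) = colH s(b, b')) :
    #{p : (V × W) × (V × W) |
        ((strongProd G H).colourClassOn colP j (S ×ˢ T)).Adj p.1 p.2 ∧ p.1.1 = p.2.1} =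
      S.ncard * #{q : W × W | (H.colourClassOn colH j T).Adj q.1 q.2} := by
  rw [Set.ncard_eq_toFinset_card', ← card_product]
  refine card_nbij' (fun p => (p.1.1, p.1.2, p.2.2)) (fun q => ((q.1, q.2.1), (q.1, q.2.2)))
    ?_ ?_ ?_ (fun _ _ => rfl)
  · rintro ⟨⟨a, b⟩, a', b'⟩ hp
    simp only [coe_filter, mem_univ, true_and, Set.mem_ofPred_eq] at hp
    obtain ⟨hadj, rfl⟩ := hp
    simpa only [coe_product, coe_filter, Set.coe_toFinset, mem_univ, true_and, Set.mem_prod,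
      Set.mem_ofPred_eq] using (colourClassOn_strongProd_adj_of_fst_eq hfib a b b').1 hadj
  · rintro ⟨a, b, b'⟩ h
    simp only [coe_product, coe_filter, Set.coe_toFinset, mem_univ, true_and, Set.mem_prod,
      Set.mem_ofPred_eq, and_true] at h ⊢
    exact (colourClassOn_strongProd_adj_of_fst_eq hfib a b b').2 h
  · rintro ⟨⟨a, b⟩, a', b'⟩ hp
    simp only [coe_filter, mem_univ, true_and, Set.mem_ofPred_eq] at hp
    obtain ⟨-, rfl⟩ := hp
    rfl

open scoped Classical in
lemma card_adj_colourClassOn_strongProd_fst_ne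
    (hbase : ∀ a a' b b', a ≠ a' → colP s((a, b), (a', b')) = colG s(a, a')) :
    #{p : (V × W) × (V × W) |
        ((strongProd G H).colourClassOn colP j (S ×ˢ T)).Adj p.1 p.2 ∧ p.1.1 ≠ p.2.1} =
      #{q : V × V | (G.colourClassOn colG j S).Adj q.1 q.2} *
        #{q : W × W | (q.1 = q.2 ∨ H.Adj q.1 q.2) ∧ q.1 ∈ T ∧ q.2 ∈ T} := by
  rw [← card_product]
  refine card_nbij' (fun p => ((p.1.1, p.2.1), (p.1.2, p.2.2)))
    (fun q => ((q.1.1, q.2.1), (q.1.2, q.2.2))) ?_ ?_ (fun _ _ => rfl) (fun _ _ => rfl)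
  · rintro ⟨⟨a, b⟩, a', b'⟩ hp
    simp only [coe_filter, mem_univ, true_and, Set.mem_ofPred_eq] at hp
    obtain ⟨hadj, ha⟩ := hp
    simpa only [coe_product, coe_filter, mem_univ, true_and, Set.mem_prod, Set.mem_ofPred_eq]
      using (colourClassOn_strongProd_adj_of_fst_ne hbase ha b b').1 hadj
  · rintro ⟨⟨a, a'⟩, b, b'⟩ h
    simp only [coe_product, coe_filter, mem_univ, true_and, Set.mem_prod, Set.mem_ofPred_eq]
      at h ⊢
    have ha : a ≠ a' := h.1.1.ne
    exact ⟨(colourClassOn_strongProd_adj_of_fst_ne hbase ha b b').2 h, ha⟩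

open scoped Classical in
theorem ncard_edgeSet_colourClassOn_strongProd {C : Finset ℕ}
    (hC : ∀ e ∈ H.edgeSet, colH e ∈ C)
    (hfib : ∀ a b b', colP s((a, b), (a, b')) = colH s(b, b'))
    (hbase : ∀ a a' b b', a ≠ a' → colP s((a, b), (a', b')) = colG s(a, a')) :
    ((strongProd G H).colourClassOn colP j (S ×ˢ T)).edgeSet.ncard =
      (H.colourClassOn colH j T).edgeSet.ncard * S.ncard +
        (G.colourClassOn colG j S).edgeSet.ncard *
          (T.ncard + 2 * ∑ i ∈ C, (H.colourClassOn colH i T).edgeSet.ncard) := by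
  refine Nat.eq_of_mul_eq_mul_left two_pos ?_
  rw [two_mul_ncard_edgeSet, ← card_filter_add_card_filter_not (fun p => p.1.1 = p.2.1),
    filter_filter, filter_filter, card_adj_colourClassOn_strongProd_fst_eq hfib,
    card_adj_colourClassOn_strongProd_fst_ne hbase, card_eq_or_adj_on,
    card_adj_on_eq_sum_colourClassOn hC, mul_sum]
  simp only [← two_mul_ncard_edgeSet]
  ring

end StrongProd

end SimpleGraph

theorem stmt_11_general {V W : Type*} [Fintype V] [Fintype W] [DecidableEq V]
    (G : SimpleGraph V) (H : SimpleGraph W) (k : ℕ)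
    (colG : Sym2 V → ℕ) (colH : Sym2 W → ℕ) (colP : Sym2 (V × W) → ℕ)
    (hkH : ∀ e ∈ H.edgeSet, colH e ∈ Finset.Icc 1 k)
    (hcolP : ∀ p q : V × W,
      colP s(p, q) = if p.1 = q.1 then colH s(p.2, q.2) else colG s(p.1, q.1))
    (j : ℕ) (u : V) (v : W) :
    ejClosed (strongProd G H) colP j (u, v) =
      ejClosed H colH j v * (1 + (G.neighborSet u).ncard) +
        ejClosed G colG j u *
          (1 + (H.neighborSet v).ncard + 2 * ∑ i ∈ Finset.Icc 1 k, ejClosed H colH i v) := by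
  have hfib : ∀ a b b', colP s((a, b), (a, b')) = colH s(b, b') := fun a b b' => by
    simp [hcolP]
  have hbase : ∀ a a' b b', a ≠ a' → colP s((a, b), (a', b')) = colG s(a, a') :=
    fun a a' b b' ha => by simp [hcolP, ha]
  simp only [SimpleGraph.ejClosed_eq_ncard_edgeSet_colourClassOn,
    SimpleGraph.closedNbhd_strongProd, SimpleGraph.ncard_closedNbhd,
    SimpleGraph.ncard_edgeSet_colourClassOn_strongProd hkH hfib hbase]

theorem stmt_11 {V W : Type*} [Fintype V] [Fintype W] [DecidableEq V]
    (G : SimpleGraph V) (H : SimpleGraph W) (k : ℕ)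
    (colG : Sym2 V → ℕ) (colH : Sym2 W → ℕ) (colP : Sym2 (V × W) → ℕ)
    (hkG : ∀ e ∈ G.edgeSet, colG e ∈ Finset.Icc 1 k)
    (hkH : ∀ e ∈ H.edgeSet, colH e ∈ Finset.Icc 1 k)
    (hcolP : ∀ p q : V × W,
      colP s(p, q) = if p.1 = q.1 then colH s(p.2, q.2) else colG s(p.1, q.1))
    (j : ℕ) (u : V) (v : W) :
    ejClosed (strongProd G H) colP j (u, v) =
      ejClosed H colH j v * (1 + (G.neighborSet u).ncard) +
        ejClosed G colG j u *
          (1 + (H.neighborSet v).ncard + 2 * ∑ i ∈ Finset.Icc 1 k, ejClosed H colH i v) :=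
  stmt_11_general G H k colG colH colP hkH hcolP j u v
end

section
/- Let Γ be a finite abelian group and R, B disjoint inverse-closed subsets of Γ not containing the identity, with (R + B) ∩ R = ∅. Colour the edges of Cay(Γ, B ∪ R) colour 1 if the difference of endpoints lies in B and colour 2 if it lies in R. If for some vertex v the number of colour-1 edges induced by the closed neighbourhood of v in Cay(Γ, B) exceeds the number of colour-2 edges induced by the closed neighbourhood of v in Cay(Γ, R), then in Cay(Γ, B ∪ R) the number of colour-1 edges in the induced closed neighbourhood of v exceeds the number of colour-2 edges in the induced closed neighbourhood of v. -/
open Pointwise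

/-- The Cayley graph of an abelian group with connecting set `S`. -/
def cay {Γ : Type*} [AddCommGroup Γ] (S : Set Γ) : SimpleGraph Γ :=
  SimpleGraph.fromRel (fun g h => g - h ∈ S)

/-- The set of edges of `G` induced by the closed neighbourhood of `v`
whose endpoint difference lies in `S`. -/
def colouredClosedNbhdEdges {Γ : Type*} [AddCommGroup Γ]
    (G : SimpleGraph Γ) (v : Γ) (S : Set Γ) : Set (Sym2 Γ) :=
  {e | e ∈ G.edgeSet ∧ (∀ x ∈ e, x ∈ insert v (G.neighborSet v)) ∧
    ∃ u w : Γ, e = s(u, w) ∧ u - w ∈ S}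

open Classical in
/-- Map an "extra red" edge (both endpoints at `B`-distance from `v`, difference in `R`)
to a blue edge with one endpoint at `R`-distance from `v`. -/
noncomputable def phiAux {Γ : Type*} [AddCommGroup Γ] (v : Γ) (R B : Set Γ)
    (e : Sym2 Γ) : Sym2 Γ :=
  if h : ∃ p : Γ × Γ, e = s(p.1, p.2) ∧ p.1 - p.2 ∈ R ∧ p.1 - v ∈ B ∧ p.2 - v ∈ B
  then s(v + (h.choose.1 - h.choose.2), h.choose.1) else e

lemma phiAux_spec {Γ : Type*} [AddCommGroup Γ] (v : Γ) (R B : Set Γ) (e : Sym2 Γ)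
    (h : ∃ p : Γ × Γ, e = s(p.1, p.2) ∧ p.1 - p.2 ∈ R ∧ p.1 - v ∈ B ∧ p.2 - v ∈ B) :
    ∃ u w : Γ, e = s(u, w) ∧ u - w ∈ R ∧ u - v ∈ B ∧ w - v ∈ B ∧
      phiAux v R B e = s(v + (u - w), u) := by
  refine ⟨h.choose.1, h.choose.2, h.choose_spec.1, h.choose_spec.2.1,
    h.choose_spec.2.2.1, h.choose_spec.2.2.2, ?_⟩
  rw [phiAux, dif_pos h]

theorem stmt_12 {Γ : Type*} [AddCommGroup Γ] [Fintype Γ] (R B : Set Γ)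
    (hdisj : Disjoint R B) (h0R : (0 : Γ) ∉ R) (h0B : (0 : Γ) ∉ B)
    (hRinv : ∀ s ∈ R, -s ∈ R) (hBinv : ∀ s ∈ B, -s ∈ B)
    (hRB : (R + B) ∩ R = ∅) (v : Γ)
    (h : (colouredClosedNbhdEdges (cay R) v R).ncard <
         (colouredClosedNbhdEdges (cay B) v B).ncard) :
    (colouredClosedNbhdEdges (cay (B ∪ R)) v R).ncard <
      (colouredClosedNbhdEdges (cay (B ∪ R)) v B).ncard := by
  classical
  -- abbreviations
  set RR := colouredClosedNbhdEdges (cay R) v R with hRR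
  set BB := colouredClosedNbhdEdges (cay B) v B with hBB
  set RU := colouredClosedNbhdEdges (cay (B ∪ R)) v R with hRU
  set BU := colouredClosedNbhdEdges (cay (B ∪ R)) v B with hBU
  set X : Set (Sym2 Γ) :=
    {e | ∃ p : Γ × Γ, e = s(p.1, p.2) ∧ p.1 - p.2 ∈ R ∧ p.1 - v ∈ B ∧ p.2 - v ∈ B} with hX
  set φ := phiAux v R B with hφ
  have hRBdisj : ∀ {a b : Γ}, a ∈ R → b ∈ B → a + b ∉ R := by
    intro a b ha hb hab
    have : a + b ∈ (R + B) ∩ R := ⟨Set.add_mem_add ha hb, hab⟩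
    rw [hRB] at this
    exact this
  have hdisj' : ∀ {a : Γ}, a ∈ R → a ∈ B → False := fun ha hb =>
    Set.disjoint_left.mp hdisj ha hb
  -- adjacency in a Cayley graph with inverse-closed connecting set
  have hadj : ∀ (S : Set Γ), (∀ s ∈ S, -s ∈ S) → ∀ a b : Γ,
      (cay S).Adj a b ↔ a ≠ b ∧ a - b ∈ S := by
    intro S hS a b
    constructor
    · rintro ⟨hne, hmem | hmem⟩
      · exact ⟨hne, hmem⟩
      · have := hS _ hmem; rw [neg_sub] at this; exact ⟨hne, this⟩
    · rintro ⟨hne, hmem⟩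
      exact ⟨hne, Or.inl hmem⟩
  have hBRinv : ∀ s ∈ B ∪ R, -s ∈ B ∪ R := by
    rintro s (hs | hs)
    · exact Or.inl (hBinv s hs)
    · exact Or.inr (hRinv s hs)
  -- membership in the closed neighbourhood
  have hnbhd : ∀ (S : Set Γ), (∀ s ∈ S, -s ∈ S) → (0 : Γ) ∉ S → ∀ x : Γ,
      x ∈ insert v ((cay S).neighborSet v) ↔ (x = v ∨ x - v ∈ S) := by
    intro S hS h0 x
    simp only [Set.mem_insert_iff, SimpleGraph.mem_neighborSet]
    rw [hadj S hS]
    constructor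
    · rintro (rfl | ⟨hne, hmem⟩)
      · exact Or.inl rfl
      · have := hS _ hmem; rw [neg_sub] at this; exact Or.inr this
    · rintro (rfl | hmem)
      · exact Or.inl rfl
      · refine Or.inr ⟨fun hvx => ?_, ?_⟩
        · rw [hvx, sub_self] at hmem; exact h0 hmem
        · have := hS _ hmem; rw [neg_sub] at this; exact this
  -- Step 1 : RU ⊆ RR ∪ X
  have h1 : RU ⊆ RR ∪ X := by
    rintro e ⟨hedge, hnb, u, w, rfl, huw⟩
    have hadj' : (cay (B ∪ R)).Adj u w := hedge
    rw [hadj (B ∪ R) hBRinv] at hadj'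
    have hu := (hnbhd (B ∪ R) hBRinv (by simp [h0B, h0R]) u).mp
      (hnb u (by simp))
    have hw := (hnbhd (B ∪ R) hBRinv (by simp [h0B, h0R]) w).mp
      (hnb w (by simp))
    -- helper: membership in RR
    have hmemRR : u - v ∈ R ∨ u = v → w - v ∈ R ∨ w = v → s(u, w) ∈ RR := by
      intro hu' hw'
      have hnbR : ∀ x : Γ, (x = v ∨ x - v ∈ R) → x ∈ insert v ((cay R).neighborSet v) :=
        fun x hx => (hnbhd R hRinv h0R x).mpr hx
      refine ⟨?_, ?_, u, w, rfl, huw⟩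
      · rw [SimpleGraph.mem_edgeSet, hadj R hRinv]; exact ⟨hadj'.1, huw⟩
      · intro x hx
        rw [Sym2.mem_iff] at hx
        rcases hx with rfl | rfl
        · exact hnbR x (hu'.symm.imp id id)
        · exact hnbR x (hw'.symm.imp id id)
    rcases hu with rfl | hu
    · -- u = v
      have : w - u ∈ R := by have := hRinv _ huw; rwa [neg_sub] at this
      exact Or.inl (hmemRR (Or.inr rfl) (by
        rcases hw with rfl | hw
        · exact Or.inr rfl
        · rcases hw with hw | hw
          · exact absurd hw (fun hw => hdisj' this hw)
          · exact Or.inl hw))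
    · rcases hw with rfl | hw
      · -- w = v
        rcases hu with hu | hu
        · exact absurd hu (fun hu => hdisj' huw hu)
        · exact Or.inl (hmemRR (Or.inl hu) (Or.inr rfl))
      · rcases hu with hu | hu
        · rcases hw with hw | hw
          · -- both in B : extra red edge
            exact Or.inr ⟨(u, w), rfl, huw, hu, hw⟩
          · -- u-v ∈ B, w-v ∈ R : impossible
            have hwu : w - u ∈ R := by have := hRinv _ huw; rwa [neg_sub] at this
            have : (w - u) + (u - v) ∈ R := by
              have := sub_add_sub_cancel w u v; rw [this]; exact hw
            exact absurd this (hRBdisj hwu hu)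
        · rcases hw with hw | hw
          · -- u-v ∈ R, w-v ∈ B : impossible
            have : (u - w) + (w - v) ∈ R := by
              have := sub_add_sub_cancel u w v; rw [this]; exact hu
            exact absurd this (hRBdisj huw hw)
          · exact Or.inl (hmemRR (Or.inl hu) (Or.inl hw))
  -- Step 2 : φ is injective on X
  have h2 : Set.InjOn φ X := by
    intro e1 he1 e2 he2 heq
    obtain ⟨u1, w1, he1', hr1, hb1, hb1', hφ1⟩ := phiAux_spec v R B e1 he1
    obtain ⟨u2, w2, he2', hr2, hb2, hb2', hφ2⟩ := phiAux_spec v R B e2 he2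
    rw [hφ, hφ1, hφ2] at heq
    rw [Sym2.eq_iff] at heq
    rcases heq with ⟨hx, hu⟩ | ⟨hx, hu⟩
    · have hw : w1 = w2 := by
        have : u1 - w1 = u2 - w2 := by
          have := congrArg (· - v) hx; simpa using this
        rw [hu] at this
        exact sub_right_injective this
      rw [he1', he2', hu, hw]
    · -- swapped case : contradiction
      exfalso
      have : u1 - w1 = u2 - v := by
        have := congrArg (· - v) hx; simpa using this
      rw [this] at hr1
      exact hdisj' hr1 hb2
  -- Step 3 : φ '' X ⊆ BU
  have h3 : φ '' X ⊆ BU := by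
    rintro e ⟨e0, he0, rfl⟩
    obtain ⟨u, w, he', hr, hb, hb', hφ0⟩ := phiAux_spec v R B e0 he0
    rw [hφ, hφ0]
    have hxne : v + (u - w) ≠ u := by
      intro heq
      have : v - w = 0 := by
        have := congrArg (· - u) heq
        calc v - w = v + (u - w) - u := by abel
        _ = u - u := by rw [heq]
        _ = 0 := sub_self u
      have : w = v := (sub_eq_zero.mp this).symm
      rw [this] at hb'
      simp at hb'; exact h0B hb'
    have hvw : v - w ∈ B := by
      have := hBinv _ hb'; rwa [neg_sub] at this
    refine ⟨?_, ?_, u, v + (u - w), Sym2.eq_swap, ?_⟩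
    · rw [SimpleGraph.mem_edgeSet, hadj (B ∪ R) hBRinv]
      refine ⟨hxne, Or.inl ?_⟩
      have : v + (u - w) - u = v - w := by abel
      rw [this]; exact hvw
    · intro x hx
      rw [Sym2.mem_iff] at hx
      rw [hnbhd (B ∪ R) hBRinv (by simp [h0B, h0R]) x]
      rcases hx with rfl | rfl
      · right; have : v + (u - w) - v = u - w := by abel
        rw [this]; exact Or.inr hr
      · right; exact Or.inl hb
    · have : u - (v + (u - w)) = w - v := by abel
      rw [this]; exact hb'
  -- Step 4 : BB ⊆ BU
  have h4 : BB ⊆ BU := by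
    rintro e ⟨hedge, hnb, u, w, rfl, huw⟩
    have hadj' : (cay B).Adj u w := hedge
    rw [hadj B hBinv] at hadj'
    refine ⟨?_, ?_, u, w, rfl, huw⟩
    · rw [SimpleGraph.mem_edgeSet, hadj (B ∪ R) hBRinv]
      exact ⟨hadj'.1, Or.inl huw⟩
    · intro x hx
      have := (hnbhd B hBinv h0B x).mp (hnb x hx)
      rw [hnbhd (B ∪ R) hBRinv (by simp [h0B, h0R]) x]
      exact this.imp id Or.inl
  -- Step 5 : BB and φ '' X are disjoint
  have h5 : Disjoint BB (φ '' X) := by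
    rw [Set.disjoint_right]
    rintro e ⟨e0, he0, rfl⟩ hmem
    obtain ⟨u, w, he', hr, hb, hb', hφ0⟩ := phiAux_spec v R B e0 he0
    rw [hφ, hφ0] at hmem
    obtain ⟨_, hnb, _⟩ := hmem
    have := (hnbhd B hBinv h0B _).mp (hnb (v + (u - w)) (by simp))
    rcases this with heq | hmem'
    · have : u - w = 0 := by
        have := congrArg (· - v) heq; simpa using this
      rw [this] at hr; exact h0R hr
    · have : v + (u - w) - v = u - w := by abel
      rw [this] at hmem'
      exact hdisj' hr hmem'
  -- finiteness
  have hfin : ∀ s : Set (Sym2 Γ), s.Finite := fun s => Set.toFinite s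
  -- final calculation
  calc RU.ncard ≤ (RR ∪ X).ncard := Set.ncard_le_ncard h1 (hfin _)
    _ ≤ RR.ncard + X.ncard := Set.ncard_union_le _ _
    _ = RR.ncard + (φ '' X).ncard := by rw [Set.ncard_image_of_injOn h2]
    _ < BB.ncard + (φ '' X).ncard := by exact Nat.add_lt_add_right h _
    _ = (BB ∪ φ '' X).ncard := (Set.ncard_union_eq h5 (hfin _) (hfin _)).symm
    _ ≤ BU.ncard := Set.ncard_le_ncard (Set.union_subset h4 h3) (hfin _)
end
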